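/- arXiv:1409.4608 — 5 statements merged into one kernel-verified Lean document; each statement's English description precedes it below -/
import Mathlib

section
/- The partial derivative of G_H(x, x₀) with respect to x₀ equals (1/(4L))·Re(cot((π/(2L))(z − z₀)) − cot((π/(2L))(z − z₀'))), where z = x + iy, z₀ = x₀ + iy₀, z₀' = x₀ − iy₀. -/
/-!
On the real line `t ↦ log ‖f t‖` has derivative `Re (f' / f)` wherever `f ≠ 0`, being the real
part of a local branch of `log ∘ f`. For `f t = 2 sin (a (z - t - b))` the logarithmic derivative
is `-a cot (a (z - t - b))`, and with `a = π / (2L)` the prefactor `-1/(2π)` of `G_H` turns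
`-a` into `1/(4L)`.
-/

open Real

theorem HasDerivAt.log_norm {f : ℝ → ℂ} {f' : ℂ} {x : ℝ} (hf : HasDerivAt f f' x)
    (hx : f x ≠ 0) : HasDerivAt (fun t => Real.log ‖f t‖) (f' / f x).re x := by
  -- Dividing by `f x` puts the values near `1`, inside the slit plane where `log` is holomorphic.
  have hlog : HasDerivAt (fun t => Complex.log (f t / f x)) (f' / f x) x := by
    simpa [hx] using (hf.div_const (f x)).clog_real (by simp [hx])
  have hre : HasDerivAt (fun t => (Complex.log (f t / f x)).re + Real.log ‖f x‖)
      (f' / f x).re x :=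
    (Complex.reCLM.hasFDerivAt.comp_hasDerivAt x hlog).add_const _
  refine hre.congr_of_eventuallyEq ?_
  filter_upwards [hf.continuousAt.eventually_ne hx] with t ht
  simp [Complex.log_re, Real.log_div, ht, hx]

theorem hasDerivAt_log_two_mul_norm_sin (a z b : ℂ) {x : ℝ}
    (hx : Complex.sin (a * (z - (x + b))) ≠ 0) :
    HasDerivAt (fun t : ℝ => Real.log (2 * ‖Complex.sin (a * (z - (t + b)))‖))
      (-a * Complex.cot (a * (z - (x + b)))).re x := by
  have hinner : HasDerivAt (fun w : ℂ => a * (z - (w + b))) (-a) x := by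
    simpa using (((hasDerivAt_id (x : ℂ)).add_const b).const_sub z).const_mul a
  have hsin : HasDerivAt (fun t : ℝ => 2 * Complex.sin (a * (z - (t + b))))
      (2 * (Complex.cos (a * (z - (x + b))) * -a)) x :=
    (((Complex.hasDerivAt_sin _).comp (x : ℂ) hinner).const_mul 2).comp_ofReal
  convert hsin.log_norm (mul_ne_zero two_ne_zero hx) using 2
  · simp
  · rw [Complex.cot_eq_cos_div_sin]
    field_simp

theorem stmt_3_general (L : ℝ) (x₀ y₀ : ℝ)
    (z z₀ z₀' : ℂ)
    (hz₀ : z₀ = (x₀ : ℂ) + y₀ * Complex.I)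
    (hz₀' : z₀' = (x₀ : ℂ) - y₀ * Complex.I)
    (hs : Complex.sin ((π / (2 * L)) * (z - z₀)) ≠ 0)
    (hs' : Complex.sin ((π / (2 * L)) * (z - z₀')) ≠ 0)
    (GH : ℝ → ℝ)
    (hGH : ∀ t : ℝ, GH t =
      -(1 / (2 * π)) * (Real.log (2 * ‖(Complex.sin ((π / (2 * L)) *
            (z - ((t : ℂ) + y₀ * Complex.I))))‖)
        - Real.log (2 * ‖(Complex.sin ((π / (2 * L)) *
            (z - ((t : ℂ) - y₀ * Complex.I))))‖))) :
    HasDerivAt GH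
      ((1 / (4 * L)) * (Complex.cot ((π / (2 * L)) * (z - z₀))
        - Complex.cot ((π / (2 * L)) * (z - z₀'))).re) x₀ := by
  subst hz₀ hz₀'
  have hsource := hasDerivAt_log_two_mul_norm_sin _ _ _ hs
  have himage := hasDerivAt_log_two_mul_norm_sin _ z (-(y₀ * Complex.I)) (x := x₀)
    (by rwa [← sub_eq_add_neg])
  simp only [← sub_eq_add_neg] at himage
  rw [funext hGH]
  refine ((hsource.sub himage).const_mul (-(1 / (2 * π)))).congr_deriv ?_
  have hre (c : ℂ) : (-(π / (2 * L) : ℂ) * c).re = -(π / (2 * L)) * c.re := by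
    rw [← Complex.re_ofReal_mul]; push_cast; rfl
  have hscale : -(1 / (2 * π)) * -(π / (2 * L)) = 1 / (4 * L) := by
    rw [neg_mul_neg, div_mul_div_comm, one_mul, show 2 * π * (2 * L) = π * (4 * L) by ring,
      div_mul_cancel_left₀ pi_ne_zero, one_div]
  rw [hre, hre, Complex.sub_re, ← hscale]
  ring

/-- Derivative of the periodic half-plane Green's function with respect to `x₀`:
`∂G_H/∂x₀ = (1/(4L)) Re( cot((π/(2L))(z - z₀)) - cot((π/(2L))(z - z₀')) )`. -/
theorem stmt_3 (L : ℝ) (hL : 0 < L) (x y x₀ y₀ : ℝ) (hy : 0 < y) (hy₀ : 0 < y₀)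
    (hne : (x, y) ≠ (x₀, y₀))
    (z z₀ z₀' : ℂ)
    (hz : z = (x : ℂ) + y * Complex.I)
    (hz₀ : z₀ = (x₀ : ℂ) + y₀ * Complex.I)
    (hz₀' : z₀' = (x₀ : ℂ) - y₀ * Complex.I)
    (hs : Complex.sin ((π / (2 * L)) * (z - z₀)) ≠ 0)
    (hs' : Complex.sin ((π / (2 * L)) * (z - z₀')) ≠ 0)
    (GH : ℝ → ℝ)
    (hGH : ∀ t : ℝ, GH t =
      -(1 / (2 * π)) * (Real.log (2 * ‖(Complex.sin ((π / (2 * L)) *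
            (z - ((t : ℂ) + y₀ * Complex.I))))‖)
        - Real.log (2 * ‖(Complex.sin ((π / (2 * L)) *
            (z - ((t : ℂ) - y₀ * Complex.I))))‖))) :
    HasDerivAt GH
      ((1 / (4 * L)) * (Complex.cot ((π / (2 * L)) * (z - z₀))
        - Complex.cot ((π / (2 * L)) * (z - z₀'))).re) x₀ :=
  stmt_3_general L x₀ y₀ z z₀ z₀' hz₀ hz₀' hs hs' GH hGH
end

section
/- The partial derivative of G_H(x, x₀) with respect to y₀ equals −(1/(4L))·Im(cot((π/(2L))(z − z₀)) + cot((π/(2L))(z − z₀'))), where z = x + iy, z₀ = x₀ + iy₀, z₀' = x₀ − iy₀. -/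
/-!
Along a line `t ↦ c + t v`, the derivative of `log ‖f‖` for holomorphic `f` is `Re (v f' / f)`,
since `log ‖f‖ = ½ log ‖f‖²`. For `f = 2 sin (a ·)` the logarithmic derivative is `a cot (a ·)`,
and the directions `v = ∓i` of `z - z₀` and `z - z₀'` in `y₀` turn `Re` into `± Im`.
-/

open Real

theorem HasDerivAt.log_norm_s4 {F : ℝ → ℂ} {F' : ℂ} {t : ℝ} (hF : HasDerivAt F F' t)
    (h0 : F t ≠ 0) : HasDerivAt (fun s => Real.log ‖F s‖) (F' / F t).re t := by
  have hsq : (fun s => Real.log ‖F s‖) = fun s => Real.log (‖F s‖ ^ 2) / 2 := by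
    funext s
    rw [Real.log_pow]
    ring
  rw [hsq]
  refine (((hF.norm_sq).log (by positivity)).div_const 2).congr_deriv ?_
  rw [Complex.inner, Complex.div_re, Complex.normSq_eq_norm_sq, Complex.mul_re, Complex.conj_re,
    Complex.conj_im]
  ring

theorem hasDerivAt_log_norm_mul_sin (k a c v : ℂ) (t : ℝ) (hk : k ≠ 0)
    (hs : Complex.sin (a * (c + t * v)) ≠ 0) :
    HasDerivAt (fun s : ℝ => Real.log ‖k * Complex.sin (a * (c + s * v))‖)
      (a * v * Complex.cot (a * (c + t * v))).re t := by
  have hw : HasDerivAt (fun w : ℂ => k * Complex.sin (a * (c + w * v)))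
      (k * (Complex.cos (a * (c + t * v)) * (a * v))) t :=
    ((Complex.hasDerivAt_sin _).comp _ ((((hasDerivAt_id _).mul_const v).const_add c).const_mul a
      |>.congr_deriv (by simp))).const_mul k
  refine (hw.comp_ofReal.log_norm_s4 (mul_ne_zero hk hs)).congr_deriv ?_
  rw [Complex.cot_eq_cos_div_sin]
  congr 1
  field_simp

theorem Complex.re_ofReal_mul_I_mul (r : ℝ) (w : ℂ) :
    ((r : ℂ) * Complex.I * w).re = -(r * w.im) := by
  simp [Complex.mul_re]

theorem stmt_4_general (L : ℝ) (x₀ y₀ : ℝ)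
    (z z₀ z₀' : ℂ)
    (hz₀ : z₀ = (x₀ : ℂ) + y₀ * Complex.I)
    (hz₀' : z₀' = (x₀ : ℂ) - y₀ * Complex.I)
    (hs : Complex.sin ((π / (2 * L)) * (z - z₀)) ≠ 0)
    (hs' : Complex.sin ((π / (2 * L)) * (z - z₀')) ≠ 0)
    (GH : ℝ → ℝ)
    (hGH : ∀ t : ℝ, GH t =
      -(1 / (2 * π)) * (Real.log (2 * ‖Complex.sin ((π / (2 * L)) *
            (z - ((x₀ : ℂ) + t * Complex.I)))‖)
        - Real.log (2 * ‖Complex.sin ((π / (2 * L)) *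
            (z - ((x₀ : ℂ) - t * Complex.I)))‖))) :
    HasDerivAt GH
      (-(1 / (4 * L)) * (Complex.cot ((π / (2 * L)) * (z - z₀))
        + Complex.cot ((π / (2 * L)) * (z - z₀'))).im) y₀ := by
  have hz₀c : ∀ t : ℝ, z - ((x₀ : ℂ) + t * Complex.I) = z - x₀ + t * -Complex.I :=
    fun t => by ring
  have hz₀'c : ∀ t : ℝ, z - ((x₀ : ℂ) - t * Complex.I) = z - x₀ + t * Complex.I :=
    fun t => by ring
  have hGH' : GH = fun t : ℝ => -(1 / (2 * π)) *
      (Real.log ‖2 * Complex.sin ((π / (2 * L)) * (z - x₀ + t * -Complex.I))‖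
        - Real.log ‖2 * Complex.sin ((π / (2 * L)) * (z - x₀ + t * Complex.I))‖) := by
    funext t
    rw [hGH, hz₀c, hz₀'c, norm_mul, norm_mul, Complex.norm_two]
  subst hz₀ hz₀'
  rw [hz₀c] at hs ⊢
  rw [hz₀'c] at hs' ⊢
  rw [hGH']
  refine ((hasDerivAt_log_norm_mul_sin _ _ _ _ _ two_ne_zero hs).sub
    (hasDerivAt_log_norm_mul_sin _ _ _ _ _ two_ne_zero hs')).const_mul _ |>.congr_deriv ?_
  have ha : (π : ℂ) / (2 * L) = ((π / (2 * L) : ℝ) : ℂ) := by push_cast; rfl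
  simp only [ha, mul_neg, neg_mul, Complex.neg_re, Complex.re_ofReal_mul_I_mul, Complex.add_im]
  have hc : 1 / (2 * π) * (π / (2 * L)) = 1 / (4 * L) := by
    field_simp
    norm_num
  rw [← hc]
  ring

/-- Derivative of the periodic half-plane Green's function with respect to `y₀`:
`∂G_H/∂y₀ = -(1/(4L)) Im( cot((π/(2L))(z - z₀)) + cot((π/(2L))(z - z₀')) )`. -/
theorem stmt_4 (L : ℝ) (hL : 0 < L) (x y x₀ y₀ : ℝ) (hy : 0 < y) (hy₀ : 0 < y₀)
    (hne : (x, y) ≠ (x₀, y₀))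
    (z z₀ z₀' : ℂ)
    (hz : z = (x : ℂ) + y * Complex.I)
    (hz₀ : z₀ = (x₀ : ℂ) + y₀ * Complex.I)
    (hz₀' : z₀' = (x₀ : ℂ) - y₀ * Complex.I)
    (hs : Complex.sin ((π / (2 * L)) * (z - z₀)) ≠ 0)
    (hs' : Complex.sin ((π / (2 * L)) * (z - z₀')) ≠ 0)
    (GH : ℝ → ℝ)
    (hGH : ∀ t : ℝ, GH t =
      -(1 / (2 * π)) * (Real.log (2 * ‖Complex.sin ((π / (2 * L)) *
            (z - ((x₀ : ℂ) + t * Complex.I)))‖)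
        - Real.log (2 * ‖Complex.sin ((π / (2 * L)) *
            (z - ((x₀ : ℂ) - t * Complex.I)))‖))) :
    HasDerivAt GH
      (-(1 / (4 * L)) * (Complex.cot ((π / (2 * L)) * (z - z₀))
        + Complex.cot ((π / (2 * L)) * (z - z₀'))).im) y₀ :=
  stmt_4_general L x₀ y₀ z z₀ z₀' hz₀ hz₀' hs hs' GH hGH
end

section
/- For fixed y > 0, the function x₀ ↦ (∂G_H/∂y₀)((x,y),(x₀,0)) = −(1/(2L))·Im(cot((π/(2L))(x + iy − x₀))) is the Poisson-type kernel for the periodic half-plane: for f(x₀) = cos(πx₀/L), the integral ∫_{−L}^{L} (∂G_H/∂y₀)((x,y),(x₀,0))·f(x₀) dx₀ equals cos(πx/L)·exp(−πy/L). -/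
/-!
With `u = exp (θ i)` and `Q = exp (w i)`, where `‖Q‖ < 1` because `0 < w.im`, one has
`cot ((w - θ) / 2) = -i (u + Q) / (u - Q)`, so `cot ((w - θ) / 2) * cos θ` is a rational
function of `u`. Its partial fraction expansion
`-(i/2) (u - u⁻¹ + 2Q + 2 (Q + Q⁻¹) Q / (u - Q))` integrates over a period to `-2π i Q`:
the powers `u^{±1}` average to zero, and so does `Q / (u - Q)`, being `-i` times the derivative
of `log (1 - Q / u)`, which never leaves the slit plane. Taking imaginary parts and rescaling
`θ = π x₀ / L`, `w = π (x + i y) / L` gives the theorem.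
-/

open Real intervalIntegral Complex
open MeasureTheory (volume)

lemma integral_exp_mul_I_zpow {n : ℤ} (hn : n ≠ 0) :
    ∫ θ in (-π)..π, cexp (θ * I) ^ n = 0 := by
  have hc : (n * I : ℂ) ≠ 0 := mul_ne_zero (Int.cast_ne_zero.2 hn) I_ne_zero
  have hper : cexp (n * I * π) = cexp (n * I * (-π : ℝ)) := by
    rw [← mul_one (cexp (n * I * (-π : ℝ))), ← exp_int_mul_two_pi_mul_I n,
      ← Complex.exp_add]
    congr 1; push_cast; ring
  simp_rw [← Complex.exp_int_mul, ← mul_assoc, mul_right_comm _ _ I]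
  rw [integral_exp_mul_complex hc, hper, sub_self, zero_div]

lemma exp_mul_I_sub_ne_zero {Q : ℂ} (hQ : ‖Q‖ < 1) (θ : ℝ) : cexp (θ * I) - Q ≠ 0 := by
  rw [sub_ne_zero]
  rintro rfl
  simp at hQ

lemma hasDerivAt_log_one_sub_mul_exp_neg {Q : ℂ} (hQ : ‖Q‖ < 1) (θ : ℝ) :
    HasDerivAt (fun θ : ℝ => log (1 - Q * cexp (-(θ * I))))
      (I * (Q / (cexp (θ * I) - Q))) θ := by
  have hexp : HasDerivAt (fun θ : ℝ => cexp (-(θ * I))) (cexp (-(θ * I)) * -I) θ := by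
    simpa using ((hasDerivAt_id (θ : ℂ)).mul_const I).neg.cexp.comp_ofReal
  have hslit : 1 - Q * cexp (-(θ * I)) ∈ slitPlane := by
    rw [sub_eq_add_neg]
    apply mem_slitPlane_of_norm_lt_one
    simpa [← neg_mul, Complex.norm_exp] using hQ
  convert ((hexp.const_mul Q).const_sub 1).clog_real hslit using 1
  have hden := exp_mul_I_sub_ne_zero hQ θ
  rw [Complex.exp_neg]
  field_simp

lemma integral_div_exp_mul_I_sub {Q : ℂ} (hQ : ‖Q‖ < 1) :
    ∫ θ in (-π)..π, Q / (cexp (θ * I) - Q) = 0 := by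
  have hcont : Continuous fun θ : ℝ => I * (Q / (cexp (θ * I) - Q)) := by
    have hden := exp_mul_I_sub_ne_zero hQ
    fun_prop (disch := assumption)
  have hFTC := integral_eq_sub_of_hasDerivAt (fun θ _ => hasDerivAt_log_one_sub_mul_exp_neg hQ θ)
    (hcont.intervalIntegrable (-π) π)
  rw [integral_const_mul] at hFTC
  simp only [ofReal_neg, neg_mul, neg_neg, exp_pi_mul_I, exp_neg_pi_mul_I, sub_self] at hFTC
  exact (mul_eq_zero.1 hFTC).resolve_left I_ne_zero

lemma cot_half_sub_mul_cos {w : ℂ} {θ : ℝ} (h : cexp (θ * I) - cexp (w * I) ≠ 0) :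
    cot ((w - θ) / 2) * Complex.cos θ = -(I / 2) * (cexp (θ * I) - (cexp (θ * I))⁻¹
      + 2 * cexp (w * I) + 2 * (cexp (w * I) + (cexp (w * I))⁻¹)
        * (cexp (w * I) / (cexp (θ * I) - cexp (w * I)))) := by
  have hexp : cexp (2 * I * ((w - θ) / 2)) = cexp (w * I) / cexp (θ * I) := by
    rw [← Complex.exp_sub]; ring_nf
  have hcos : Complex.cos θ = (cexp (θ * I) + (cexp (θ * I))⁻¹) / 2 := by
    rw [Complex.cos, ← Complex.exp_neg, neg_mul]
  rw [cot_eq_exp_ratio, hexp, hcos]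
  have hu : cexp (θ * I) ≠ 0 := Complex.exp_ne_zero _
  have hQ : cexp (w * I) ≠ 0 := Complex.exp_ne_zero _
  generalize cexp (θ * I) = u at *
  generalize cexp (w * I) = Q at *
  field_simp
  linear_combination (Q + Q * u ^ 2 + u + u ^ 3) * I_sq

lemma integral_im_cot_half_sub_mul_cos {w : ℂ} (hw : 0 < w.im) :
    ∫ θ in (-π)..π, (cot ((w - θ) / 2)).im * Real.cos θ = -(2 * π) * (cexp (w * I)).re := by
  set Q := cexp (w * I)
  have hQ : ‖Q‖ < 1 := by simpa [Q, Complex.norm_exp] using hw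
  have hden := exp_mul_I_sub_ne_zero hQ
  have hu (θ : ℝ) : cexp (θ * I) ≠ 0 := Complex.exp_ne_zero _
  have hi_exp : IntervalIntegrable (fun θ : ℝ => cexp (θ * I)) volume (-π) π :=
    (by fun_prop : Continuous _).intervalIntegrable _ _
  have hi_inv : IntervalIntegrable (fun θ : ℝ => (cexp (θ * I))⁻¹) volume (-π) π :=
    (by fun_prop (disch := assumption) : Continuous _).intervalIntegrable _ _
  have hi_div : IntervalIntegrable (fun θ : ℝ => Q / (cexp (θ * I) - Q)) volume (-π) π :=
    (by fun_prop (disch := assumption) : Continuous _).intervalIntegrable _ _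
  have h1 : ∫ θ in (-π)..π, cexp (θ * I) = 0 := by
    simpa using integral_exp_mul_I_zpow one_ne_zero
  have h2 : ∫ θ in (-π)..π, (cexp (θ * I))⁻¹ = 0 := by
    simpa using integral_exp_mul_I_zpow (n := -1) (by norm_num)
  set F : ℝ → ℂ := fun θ => -(I / 2) * (cexp (θ * I) - (cexp (θ * I))⁻¹ + 2 * Q
    + 2 * (Q + Q⁻¹) * (Q / (cexp (θ * I) - Q)))
  have hF_integrable : IntervalIntegrable F volume (-π) π :=
    (((hi_exp.sub hi_inv).add intervalIntegrable_const).add (hi_div.const_mul _)).const_mul _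
  have hF_integral : ∫ θ in (-π)..π, F θ = -(2 * π * I) * Q := by
    rw [integral_const_mul, integral_add ((hi_exp.sub hi_inv).add intervalIntegrable_const)
      (hi_div.const_mul _), integral_add (hi_exp.sub hi_inv) intervalIntegrable_const,
      integral_sub hi_exp hi_inv, h1, h2, integral_const, integral_const_mul,
      integral_div_exp_mul_I_sub hQ]
    simp only [sub_neg_eq_add, real_smul, ofReal_add]
    ring
  calc ∫ θ in (-π)..π, (cot ((w - θ) / 2)).im * Real.cos θ
      = ∫ θ in (-π)..π, (F θ).im := by
        refine integral_congr fun θ _ => ?_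
        rw [← im_mul_ofReal, ofReal_cos, cot_half_sub_mul_cos (hden θ)]
    _ = (∫ θ in (-π)..π, F θ).im := intervalIntegral_im hF_integrable
    _ = -(2 * π) * Q.re := by simp [hF_integral]

/-- The Poisson-type kernel for the periodic half-plane reproduces
`cos(πx/L) exp(-πy/L)` from the boundary data `f(x₀) = cos(πx₀/L)`:
`∫_{-L}^{L} (∂G_H/∂y₀)((x,y),(x₀,0)) cos(πx₀/L) dx₀ = cos(πx/L) exp(-πy/L)`,
where `(∂G_H/∂y₀)((x,y),(x₀,0)) = -(1/(2L)) Im(cot((π/(2L))(x + iy - x₀)))`. -/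
theorem stmt_5 (L : ℝ) (hL : 0 < L) (x y : ℝ) (hy : 0 < y) :
    ∫ x₀ in (-L)..L,
        (-(1 / (2 * L)) * (Complex.cot ((π / (2 * L)) *
            (((x : ℂ) + y * Complex.I) - (x₀ : ℂ)))).im) * Real.cos (π * x₀ / L)
      = Real.cos (π * x / L) * Real.exp (-π * y / L) := by
  set w : ℂ := (π / L : ℝ) * (x + y * I)
  have hw_re : w.re = π * x / L := by simp [w]; ring
  have hw_im : w.im = π * y / L := by simp [w]; ring
  have hintegrand (t : ℝ) : -(1 / (2 * L)) * (cot ((π / (2 * L)) * ((x + y * I) - t))).im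
      * Real.cos (π * t / L)
        = -(1 / (2 * L)) * ((cot ((w - ↑(π / L * t)) / 2)).im * Real.cos (π / L * t)) := by
    have harg : (π / (2 * L)) * ((x + y * I) - t) = (w - ↑(π / L * t)) / 2 := by
      simp only [w]; push_cast; ring
    rw [harg, mul_div_right_comm, mul_assoc]
  rw [integral_congr fun t _ => hintegrand t, intervalIntegral.integral_const_mul,
    integral_comp_mul_left (fun θ => (cot ((w - θ) / 2)).im * Real.cos θ) (by positivity),
    mul_neg, div_mul_cancel₀ _ hL.ne',
    integral_im_cot_half_sub_mul_cos (by rw [hw_im]; positivity),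
    Complex.exp_re, mul_I_re, mul_I_im, hw_re, hw_im, smul_eq_mul]
  field_simp
end

section
/- The diagonal limit of the smooth kernel part: if h is C¹ at x, then lim_{x₀ → x} G̃(x, x₀) = −(1/(4π))·ln(1 + h'(x)²), where G̃(x,x₀) = −(1/(4π))·ln((sin²((π/(2L))(x−x₀)) + sinh²((π/(2L))(h(x)−h(x₀))))/sin²((π/(2L))(x−x₀))). -/
open Real Filter Topology

/-! Both `sin ((π / (2L)) (x - x₀))` and `sinh ((π / (2L)) (h x - h x₀))` vanish at `x₀ = x`, with
derivatives `-π / (2L)` and `-(π / (2L)) h'`. Hence their quotient tends to `h'`, and off the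
diagonal the argument of the logarithm is `1 + (sinh / sin)²`, which tends to `1 + h'²`. -/

theorem tendsto_div_nhdsNE_of_hasDerivAt {f g : ℝ → ℝ} {f' g' x : ℝ}
    (hf : HasDerivAt f f' x) (hg : HasDerivAt g g' x) (hf0 : f x = 0) (hg0 : g x = 0)
    (hg' : g' ≠ 0) : Tendsto (fun y => f y / g y) (𝓝[≠] x) (𝓝 (f' / g')) := by
  refine (hf.tendsto_slope.div hg.tendsto_slope hg').congr' ?_
  filter_upwards [self_mem_nhdsWithin] with y hy
  have hyx : y - x ≠ 0 := sub_ne_zero.mpr hy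
  simp only [Pi.div_apply, slope_def_field, hf0, hg0, sub_zero]
  field_simp

theorem add_sq_div_sq_eq_one_add_div_sq {a : ℝ} (b : ℝ) (ha : a ≠ 0) :
    (a ^ 2 + b ^ 2) / a ^ 2 = 1 + (b / a) ^ 2 := by
  field_simp

/-- Diagonal limit of the smooth part of the single-layer kernel:
`lim_{x₀ → x} G̃(x, x₀) = -(1/(4π)) ln(1 + h'(x)²)`. -/
theorem stmt_13 (L : ℝ) (hL : 0 < L) (h : ℝ → ℝ) (x h' : ℝ)
    (hd : HasDerivAt h h' x)
    (Gt : ℝ → ℝ → ℝ)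
    (hGt : ∀ x' x₀ : ℝ, Gt x' x₀ =
      -(1 / (4 * π)) * Real.log
        ((Real.sin ((π / (2 * L)) * (x' - x₀)) ^ 2
            + Real.sinh ((π / (2 * L)) * (h x' - h x₀)) ^ 2)
          / Real.sin ((π / (2 * L)) * (x' - x₀)) ^ 2)) :
    Tendsto (fun x₀ => Gt x x₀) (nhdsWithin x {x}ᶜ)
      (nhds (-(1 / (4 * π)) * Real.log (1 + h' ^ 2))) := by
  set c : ℝ := π / (2 * L)
  have hc : c ≠ 0 := (div_pos pi_pos (by linarith)).ne'
  have hsin : HasDerivAt (fun y => sin (c * (x - y))) (-c) x := by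
    simpa using ((hasDerivAt_id x).const_sub x |>.const_mul c).sin
  have hsinh : HasDerivAt (fun y => sinh (c * (h x - h y))) (-(c * h')) x := by
    simpa using (hd.const_sub (h x) |>.const_mul c).sinh
  have hratio : Tendsto (fun y => sinh (c * (h x - h y)) / sin (c * (x - y))) (𝓝[≠] x)
      (𝓝 h') := by
    simpa [neg_div_neg_eq, hc] using
      tendsto_div_nhdsNE_of_hasDerivAt hsinh hsin (by simp) (by simp) (neg_ne_zero.mpr hc)
  have hlog := (continuousAt_log (by positivity : 1 + h' ^ 2 ≠ 0)).tendsto.comp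
    ((hratio.pow 2).const_add 1)
  refine (hlog.const_mul _).congr' ?_
  filter_upwards [hsin.eventually_ne (c := 0) (neg_ne_zero.mpr hc)] with y hy
  simp only [Function.comp_apply, hGt, add_sq_div_sq_eq_one_add_div_sq _ hy]
end

section
/- The Fourier cosine integral of the periodic logarithmic kernel: for every positive integer m and every x ∈ ℝ, −(1/(4π))·∫_{−L}^{L} ln(4·sin²((π/(2L))(x − x₀)))·cos((mπ/L)·x₀) dx₀ = (L/(2πm))·cos((mπ/L)·x). -/
/-!
With `K t = log (4 sin² (t / 2))`, the substitution `s = π x₀ / L` turns the integral into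
`(L / π) ∫_{-π}^{π} K (y - s) cos (m s) ds` with `y = π x / L`. As `K` is `2π`-periodic and even,
this equals `cos (m y) ∫_{-π}^{π} K t cos (m t) dt = 2 cos (m y) ∫_0^π K t cos (m t) dt`.
Integrating by parts on `(0, π)` (the boundary terms `K t sin (m t)` vanish, since
`s log s → 0`) leaves `-(1/m) ∫_0^π cot (t / 2) sin (m t) dt`, and by telescoping
`cot (t / 2) sin (m t) = ∑_{k<m} (cos (k t) + cos ((k + 1) t))`, whose integral over `(0, π)` is `π`.
-/

open Real intervalIntegral MeasureTheory Set Filter Topology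

section SymmetricIntegral

variable {E : Type*} [NormedAddCommGroup E] [NormedSpace ℝ E] {f : ℝ → E}

theorem Function.Odd.intervalIntegral_eq_zero (hf : Function.Odd f) (a : ℝ) :
    ∫ x in -a..a, f x = 0 := by
  have h := integral_comp_neg (a := -a) (b := a) f
  simp only [hf _, intervalIntegral.integral_neg, neg_neg] at h
  have h2 : (2 : ℝ) • ∫ x in -a..a, f x = 0 := by
    rw [two_smul]
    nth_rewrite 1 [← h]
    exact neg_add_cancel _
  exact (smul_eq_zero.mp h2).resolve_left two_ne_zero

theorem Function.Even.intervalIntegral_eq_two_smul (hf : Function.Even f) {a : ℝ}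
    (hint : IntervalIntegrable f volume 0 a) :
    ∫ x in -a..a, f x = (2 : ℝ) • ∫ x in 0..a, f x := by
  have hneg : ∫ x in -a..0, f x = ∫ x in 0..a, f x := by
    simpa [hf _] using (integral_comp_neg (a := 0) (b := a) f).symm
  have hint' : IntervalIntegrable f volume (-a) 0 := by
    simpa [hf _] using ((IntervalIntegrable.iff_comp_neg (f := f)).mp hint).symm
  rw [← integral_add_adjacent_intervals hint' hint, hneg, two_smul]

end SymmetricIntegral

theorem cos_half_mul_sin_nat_mul (t : ℝ) (m : ℕ) :
    cos (t / 2) * sin (m * t) =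
      sin (t / 2) * ∑ k ∈ Finset.range m, (cos (k * t) + cos ((k + 1) * t)) := by
  have step (k : ℕ) : sin (t / 2) * (cos (k * t) + cos ((k + 1) * t)) =
      cos (t / 2) * (sin ((k + 1) * t) - sin (k * t)) := by
    have e1 : (k : ℝ) * t = (k + 1 / 2) * t - t / 2 := by ring
    have e2 : ((k : ℝ) + 1) * t = (k + 1 / 2) * t + t / 2 := by ring
    rw [e1, e2, cos_sub, cos_add, sin_sub, sin_add]
    ring
  simp_rw [Finset.mul_sum, step, ← Finset.mul_sum]
  have telescope := Finset.sum_range_sub (fun k : ℕ => sin (k * t)) m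
  push_cast at telescope
  simp [telescope]

theorem integral_cos_nat_mul_zero_pi (k : ℕ) :
    ∫ t in (0)..π, cos (k * t) = if k = 0 then π else 0 := by
  split_ifs with hk
  · simp [hk]
  · have hk' : (k : ℝ) ≠ 0 := Nat.cast_ne_zero.mpr hk
    simp [integral_comp_mul_left (fun t => cos t) hk', sin_nat_mul_pi]

theorem tendsto_mul_log_four_mul_sq_nhds_zero :
    Tendsto (fun s : ℝ => s * log (4 * s ^ 2)) (𝓝 0) (𝓝 0) := by
  have split (s : ℝ) : s * log (4 * s ^ 2) = s * log 4 + 2 * (s * log s) := by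
    rcases eq_or_ne s 0 with rfl | hs
    · simp
    · rw [log_mul (by norm_num) (by positivity), log_pow]
      push_cast
      ring
  simp_rw [split]
  have hcont : Continuous fun s : ℝ => s * log 4 + 2 * (s * log s) := by
    fun_prop
  simpa using hcont.tendsto 0

noncomputable def periodicLogKernel (t : ℝ) : ℝ := log (4 * sin (t / 2) ^ 2)

namespace periodicLogKernel

theorem even : Function.Even periodicLogKernel := fun t => by
  simp [periodicLogKernel, neg_div]

theorem periodic : Function.Periodic periodicLogKernel (2 * π) := fun t => by
  simp [periodicLogKernel, add_div, sin_add_pi]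

theorem intervalIntegrable (a b : ℝ) : IntervalIntegrable periodicLogKernel volume a b := by
  have : AnalyticOnNhd ℝ (fun t => 4 * sin (t / 2) ^ 2) univ := fun t _ => by
    fun_prop
  exact (this.mono (subset_univ _)).meromorphicOn.intervalIntegrable_log

theorem hasDerivAt {t : ℝ} (ht : sin (t / 2) ≠ 0) :
    HasDerivAt periodicLogKernel (cos (t / 2) / sin (t / 2)) t := by
  have hsin : HasDerivAt (fun u => sin (u / 2)) (cos (t / 2) * (1 / 2)) t :=
    ((hasDerivAt_id' t).div_const 2).sin
  refine (((hsin.fun_pow 2).const_mul 4).log (by positivity)).congr_deriv ?_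
  field_simp
  ring

theorem tendsto_mul_sin_nhdsGT_zero (a : ℝ) :
    Tendsto (fun t => periodicLogKernel t * sin (a * t)) (𝓝[>] 0) (𝓝 0) := by
  have hsin : Tendsto (fun t : ℝ => sin (t / 2)) (𝓝[>] 0) (𝓝 0) := by
    have : Continuous fun t : ℝ => sin (t / 2) := by fun_prop
    simpa using (this.tendsto 0).mono_left nhdsWithin_le_nhds
  have hbound : Tendsto (fun t => |a| * π * ‖sin (t / 2) * periodicLogKernel t‖)
      (𝓝[>] 0) (𝓝 0) := by
    simpa [periodicLogKernel] using
      (tendsto_mul_log_four_mul_sq_nhds_zero.comp hsin).norm.const_mul (|a| * π)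
  refine squeeze_zero_norm' ?_ hbound
  filter_upwards [Ioo_mem_nhdsGT pi_pos] with t ⟨ht0, htπ⟩
  have hjordan : t ≤ π * sin (t / 2) := by
    have := mul_le_sin (x := t / 2) (by linarith) (by linarith)
    field_simp at this
    linarith
  have hsin_le : |sin (a * t)| ≤ |a| * π * |sin (t / 2)| := by
    calc |sin (a * t)| ≤ |a * t| := abs_sin_le_abs
      _ = |a| * t := by rw [abs_mul, abs_of_pos ht0]
      _ ≤ |a| * (π * sin (t / 2)) := by gcongr
      _ = |a| * π * |sin (t / 2)| := by
        rw [abs_of_pos (sin_pos_of_pos_of_lt_pi (by linarith) (by linarith))]; ring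
  rw [norm_mul, norm_mul, Real.norm_eq_abs, Real.norm_eq_abs, Real.norm_eq_abs]
  calc |periodicLogKernel t| * |sin (a * t)|
      ≤ |periodicLogKernel t| * (|a| * π * |sin (t / 2)|) := by gcongr
    _ = |a| * π * (|sin (t / 2)| * |periodicLogKernel t|) := by ring

theorem integral_mul_cos_zero_pi {m : ℕ} (hm : m ≠ 0) :
    ∫ t in (0)..π, periodicLogKernel t * cos (m * t) = -π / m := by
  set P : ℝ → ℝ := fun t => ∑ k ∈ Finset.range m, (cos (k * t) + cos ((k + 1) * t))
  have hP : Continuous P := by fun_prop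
  have hKcos : IntervalIntegrable (fun t => periodicLogKernel t * cos (m * t)) volume 0 π :=
    (intervalIntegrable 0 π).mul_continuousOn (by fun_prop)
  have hderiv : ∀ t ∈ Ioo 0 π, HasDerivAt (fun t => periodicLogKernel t * sin (m * t))
      (P t + m * (periodicLogKernel t * cos (m * t))) t := by
    intro t ⟨ht0, htπ⟩
    have hs : sin (t / 2) ≠ 0 := (sin_pos_of_pos_of_lt_pi (by linarith) (by linarith)).ne'
    have hcot : cos (t / 2) / sin (t / 2) * sin (m * t) = P t := by
      rw [div_mul_eq_mul_div, cos_half_mul_sin_nat_mul, mul_div_cancel_left₀ _ hs]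
    refine ((hasDerivAt hs).mul ((hasDerivAt_id' t).const_mul (m : ℝ)).sin).congr_deriv ?_
    rw [← hcot]
    ring
  have hcontπ : ContinuousAt (fun t => periodicLogKernel t * sin (m * t)) π :=
    (hasDerivAt (by simp)).continuousAt.mul (by fun_prop)
  have hparts : ∫ t in (0)..π, (P t + m * (periodicLogKernel t * cos (m * t))) = 0 := by
    rw [integral_eq_sub_of_hasDerivAt_of_tendsto pi_pos hderiv
      (hP.intervalIntegrable 0 π |>.add (hKcos.const_mul _))
      (tendsto_mul_sin_nhdsGT_zero m) (hcontπ.tendsto.mono_left nhdsWithin_le_nhds)]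
    simp [sin_nat_mul_pi]
  have hPint : ∫ t in (0)..π, P t = π := by
    have hterm (k : ℕ) :
        ∫ t in (0)..π, (cos (k * t) + cos ((k + 1) * t)) = if k = 0 then π else 0 := by
      have hsucc := integral_cos_nat_mul_zero_pi (k + 1)
      push_cast at hsucc
      rw [intervalIntegral.integral_add
        (Continuous.intervalIntegrable (by fun_prop) _ _)
        (Continuous.intervalIntegrable (by fun_prop) _ _), integral_cos_nat_mul_zero_pi, hsucc]
      simp
    simp only [P]
    rw [intervalIntegral.integral_finsetSum
      (fun k _ => Continuous.intervalIntegrable (by fun_prop) _ _)]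
    simp [hterm, Nat.pos_of_ne_zero hm]
  rw [intervalIntegral.integral_add (hP.intervalIntegrable 0 π) (hKcos.const_mul _),
    intervalIntegral.integral_const_mul, hPint] at hparts
  field_simp
  linarith

theorem integral_mul_cos {m : ℕ} (hm : m ≠ 0) :
    ∫ t in -π..π, periodicLogKernel t * cos (m * t) = -(2 * π) / m := by
  have heven : Function.Even fun t => periodicLogKernel t * cos (m * t) := fun t => by
    simp [even t]
  rw [heven.intervalIntegral_eq_two_smul
      ((intervalIntegrable 0 π).mul_continuousOn (by fun_prop)),
    integral_mul_cos_zero_pi hm, smul_eq_mul]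
  ring

theorem integral_mul_sin (a : ℝ) : ∫ t in -π..π, periodicLogKernel t * sin (a * t) = 0 :=
  Function.Odd.intervalIntegral_eq_zero (fun t => by simp [even t]) π

theorem integral_sub_mul_cos {m : ℕ} (hm : m ≠ 0) (y : ℝ) :
    ∫ t in -π..π, periodicLogKernel (y - t) * cos (m * t) = -(2 * π) / m * cos (m * y) := by
  set g : ℝ → ℝ := fun u => periodicLogKernel u * cos (m * (y - u))
  have hg : Function.Periodic g (2 * π) := fun u => by
    simp only [g, periodic u, mul_sub, mul_add, ← sub_sub, cos_sub_nat_mul_two_pi]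
  have hint (h : ℝ → ℝ) (hh : Continuous h) :
      IntervalIntegrable (fun u => periodicLogKernel u * h u) volume (-π) π :=
    (intervalIntegrable _ _).mul_continuousOn hh.continuousOn
  calc ∫ t in -π..π, periodicLogKernel (y - t) * cos (m * t)
      = ∫ t in -π..π, g (y - t) := by simp only [g, sub_sub_cancel]
    _ = ∫ u in (y - π)..(y - π + 2 * π), g u := by
        rw [integral_comp_sub_left g y, sub_neg_eq_add]
        ring_nf
    _ = ∫ u in -π..π, g u := by
        rw [hg.intervalIntegral_add_eq (y - π) (-π)]
        ring_nf
    _ = ∫ u in -π..π, (cos (m * y) * (periodicLogKernel u * cos (m * u)) +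
          sin (m * y) * (periodicLogKernel u * sin (m * u))) := by
        congr 1
        ext u
        simp only [g, mul_sub, cos_sub]
        ring
    _ = -(2 * π) / m * cos (m * y) := by
        rw [intervalIntegral.integral_add ((hint _ (by fun_prop)).const_mul _)
            ((hint _ (by fun_prop)).const_mul _),
          intervalIntegral.integral_const_mul, intervalIntegral.integral_const_mul,
          integral_mul_cos hm, integral_mul_sin]
        ring

end periodicLogKernel

/-- Fourier cosine integrals of the periodic logarithmic kernel:
`-(1/(4π)) ∫_{-L}^{L} ln(4 sin²((π/(2L))(x-x₀))) cos((mπ/L) x₀) dx₀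
   = (L/(2πm)) cos((mπ/L) x)` for every positive integer `m`. -/
theorem stmt_16 (L : ℝ) (hL : 0 < L) (m : ℕ) (hm : 0 < m) (x : ℝ) :
    -(1 / (4 * π)) * ∫ x₀ in (-L)..L,
        Real.log (4 * Real.sin ((π / (2 * L)) * (x - x₀)) ^ 2)
          * Real.cos ((m * π / L) * x₀)
      = (L / (2 * π * m)) * Real.cos ((m * π / L) * x) := by
  set c := π / L
  have hc : c ≠ 0 := div_ne_zero pi_ne_zero hL.ne'
  have hcL : c * L = π := div_mul_cancel₀ π hL.ne'
  have hrescale (x₀ : ℝ) :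
      log (4 * sin ((π / (2 * L)) * (x - x₀)) ^ 2) * cos ((m * π / L) * x₀)
        = periodicLogKernel (c * x - c * x₀) * cos (m * (c * x₀)) := by
    simp only [periodicLogKernel, c]
    ring_nf
  simp_rw [hrescale]
  rw [integral_comp_mul_left (fun s => periodicLogKernel (c * x - s) * cos (m * s)) hc,
    mul_neg, hcL, periodicLogKernel.integral_sub_mul_cos hm.ne', smul_eq_mul]
  simp only [c]
  field_simp
  ring_nf
end
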